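/- At every point (q₂,q₃,α) of ℝ² × (−2,2), the point e(q₂,q₃,α) = (q, p) satisfies: (i) p_i = ∂Ŝ/∂q_i(q,α) for i = 1,2,3, (ii) the constraint ∂Ŝ/∂α(q,α) = 0, and (iii) the energy condition H(q,p) = ½(p₁² − p₂² − p₃²) = 0. Hence the image of e is contained in the energy surface H = 0 (e defines a constrained Lagrange submanifold). -/

import Mathlib

/-! The momenta `∂Ŝ/∂qᵢ` do not depend on `q`, so (i) is read off directly. The constraint
`∂Ŝ/∂α = 0` is affine in `q₁` with coefficient one, and `q₁*` is its solution. Finally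
`p₂² + p₃² = α²(4 − α²)/4 + α⁴/4 = α² = p₁²`. -/

/-- The generating family of the toy model. -/
noncomputable def Shat (q₁ q₂ q₃ α : ℝ) : ℝ :=
  -α ^ 4 / 4 + q₁ * α + (1 / 2) * q₂ * α * Real.sqrt (4 - α ^ 2) + (1 / 2) * q₃ * α ^ 2

/-- The `q₁` coordinate of the Lagrange-submanifold embedding of the toy model. -/
noncomputable def q₁star (q₂ q₃ α : ℝ) : ℝ :=
  α ^ 3 - q₃ * α - (1 / 2) * q₂ * Real.sqrt (4 - α ^ 2)
    + (1 / 2) * q₂ * α ^ 2 * (Real.sqrt (4 - α ^ 2))⁻¹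

theorem hasDerivAt_sqrt_four_sub_sq {α : ℝ} (hα : α ^ 2 < 4) :
    HasDerivAt (fun a : ℝ => Real.sqrt (4 - a ^ 2)) (-α / Real.sqrt (4 - α ^ 2)) α := by
  have hpos : 0 < Real.sqrt (4 - α ^ 2) := Real.sqrt_pos.mpr (by linarith)
  convert ((hasDerivAt_pow 2 α).const_sub 4).sqrt (by linarith) using 1
  field_simp
  ring

namespace Shat

variable (q₁ q₂ q₃ α : ℝ)

theorem hasDerivAt_q₁ : HasDerivAt (fun t => Shat t q₂ q₃ α) α q₁ :=
  ((((hasDerivAt_id' q₁).mul_const α).const_add _).add_const _ |>.add_const _).congr_deriv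
    (one_mul α)

theorem hasDerivAt_q₂ :
    HasDerivAt (fun t => Shat q₁ t q₃ α) ((1 / 2) * α * Real.sqrt (4 - α ^ 2)) q₂ :=
  (((((hasDerivAt_id' q₂).const_mul (1 / 2)).mul_const α).mul_const
    (Real.sqrt (4 - α ^ 2))).const_add _ |>.add_const _).congr_deriv (by ring)

theorem hasDerivAt_q₃ : HasDerivAt (fun t => Shat q₁ q₂ t α) (α ^ 2 / 2) q₃ :=
  ((((hasDerivAt_id' q₃).const_mul (1 / 2)).mul_const (α ^ 2)).const_add _).congr_deriv
    (by ring)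

variable {α} in
theorem hasDerivAt_α (hα : α ^ 2 < 4) :
    HasDerivAt (fun a => Shat q₁ q₂ q₃ a)
      (-α ^ 3 + q₁ + (1 / 2) * q₂ * (Real.sqrt (4 - α ^ 2) - α ^ 2 / Real.sqrt (4 - α ^ 2))
        + q₃ * α) α :=
  ((((((hasDerivAt_pow 4 α).neg.div_const 4).add ((hasDerivAt_id' α).const_mul q₁)).add
    (((hasDerivAt_id' α).const_mul ((1 / 2) * q₂)).mul (hasDerivAt_sqrt_four_sub_sq hα))).add
    ((hasDerivAt_pow 2 α).const_mul ((1 / 2) * q₃)))).congr_deriv (by push_cast; ring)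

variable {q₂ q₃ α} in
theorem deriv_α_q₁star (hα : α ^ 2 < 4) :
    deriv (fun a => Shat (q₁star q₂ q₃ α) q₂ q₃ a) α = 0 := by
  rw [(hasDerivAt_α _ q₂ q₃ hα).deriv, q₁star]
  ring

end Shat

theorem hamiltonian_eMap_eq_zero {α : ℝ} (hα : α ^ 2 ≤ 4) :
    (1 / 2) * (α ^ 2 - ((1 / 2) * α * Real.sqrt (4 - α ^ 2)) ^ 2 - (α ^ 2 / 2) ^ 2) = 0 := by
  rw [mul_pow, Real.sq_sqrt (by linarith)]
  ring

/-- At every point `(q₂,q₃,α)` of `ℝ² × (−2,2)`, the point `e(q₂,q₃,α) = (q,p)` with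
`q = (q₁*(q₂,q₃,α), q₂, q₃)` and `p = (α, ½α√(4−α²), α²/2)` satisfies:
(i) `pᵢ = ∂Ŝ/∂qᵢ(q,α)` for `i = 1,2,3`, (ii) the constraint `∂Ŝ/∂α(q,α) = 0`, and
(iii) the energy condition `H(q,p) = ½(p₁² − p₂² − p₃²) = 0`. -/
theorem eMap_mem_energy_surface (q₂ q₃ α : ℝ) (hα : α ∈ Set.Ioo (-2 : ℝ) 2) :
    deriv (fun t => Shat t q₂ q₃ α) (q₁star q₂ q₃ α) = α
    ∧ deriv (fun t => Shat (q₁star q₂ q₃ α) t q₃ α) q₂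
        = (1 / 2) * α * Real.sqrt (4 - α ^ 2)
    ∧ deriv (fun t => Shat (q₁star q₂ q₃ α) q₂ t α) q₃ = α ^ 2 / 2
    ∧ deriv (fun a => Shat (q₁star q₂ q₃ α) q₂ q₃ a) α = 0
    ∧ (1 / 2) * (α ^ 2 - ((1 / 2) * α * Real.sqrt (4 - α ^ 2)) ^ 2 - (α ^ 2 / 2) ^ 2) = 0 := by
  have hα_sq : α ^ 2 < 4 := by nlinarith [hα.1, hα.2]
  exact ⟨(Shat.hasDerivAt_q₁ ..).deriv, (Shat.hasDerivAt_q₂ ..).deriv,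
    (Shat.hasDerivAt_q₃ ..).deriv, Shat.deriv_α_q₁star hα_sq, hamiltonian_eMap_eq_zero hα_sq.le⟩
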